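/- Fix a prime p. Let φ : A → B be a surjective homomorphism of abelian groups, and let μ be a p-invariant B-valued distribution on X. Then there exists a p-invariant A-valued distribution μ̃ on X such that φ(μ̃(U)) = μ(U) for every compact open subset U of X. -/

import Mathlib

/-- `X := (ℚ_p × ℚ_p) \ {(0,0)}`. -/
def X (p : ℕ) [Fact p.Prime] : Set (ℚ_[p] × ℚ_[p]) := {v | v ≠ 0}

/-- The set `X₀` of primitive vectors of `ℤ_p²`. -/
def X0 (p : ℕ) [Fact p.Prime] : Set (ℚ_[p] × ℚ_[p]) :=
  {v | ‖v.1‖ ≤ 1 ∧ ‖v.2‖ ≤ 1 ∧ (‖v.1‖ = 1 ∨ ‖v.2‖ = 1)}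

/-- `p^j·U := {(p^j x, p^j y) : (x, y) ∈ U}`. -/
def pScale (p : ℕ) [Fact p.Prime] (j : ℤ) (U : Set (ℚ_[p] × ℚ_[p])) : Set (ℚ_[p] × ℚ_[p]) :=
  (fun v => ((p : ℚ_[p]) ^ j * v.1, (p : ℚ_[p]) ^ j * v.2)) '' U

/-- A compact open subset of `X`: compact and open in `ℚ_p × ℚ_p` and contained in `X`. -/
def IsCompactOpen (p : ℕ) [Fact p.Prime] (U : Set (ℚ_[p] × ℚ_[p])) : Prop :=
  IsCompact U ∧ IsOpen U ∧ U ⊆ X p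

/-- An `A`-valued distribution on `X`: additive on disjoint compact open subsets of `X`. -/
def IsDistribution (p : ℕ) [Fact p.Prime] {A : Type*} [AddCommGroup A]
    (μ : Set (ℚ_[p] × ℚ_[p]) → A) : Prop :=
  ∀ U V, IsCompactOpen p U → IsCompactOpen p V → Disjoint U V → μ (U ∪ V) = μ U + μ V

/-- `μ` is `p`-invariant: `μ(p·U) = μ(U)` for every compact open `U ⊆ X`. -/
def IsPInvariant (p : ℕ) [Fact p.Prime] {A : Type*} [AddCommGroup A]
    (μ : Set (ℚ_[p] × ℚ_[p]) → A) : Prop :=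
  ∀ U, IsCompactOpen p U → μ (pScale p 1 U) = μ U

open Set Function MeasureTheory
open scoped Pointwise

/-!
`X` is the disjoint union of the shells `p^j·X₀`, so a `p`-invariant distribution is determined
by its values on compact open subsets of `X₀`: `μ U = ∑ⱼ μ (X₀ ∩ p^(-j)·U)`. Conversely, the same
formula turns any finitely additive function `ν` on the clopen subsets of `X₀` into a `p`-invariant
distribution on `X`. Such a `ν` with values in `B` is the same as a homomorphism
`LocallyConstant X₀ ℤ →+ B`, and `LocallyConstant X₀ ℤ` is a free abelian group by Nöbeling's
theorem, so the restriction of `μ` to `X₀` lifts along `φ`.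
-/

instance Prod.isUltrametricDist {α β : Type*} [PseudoMetricSpace α] [PseudoMetricSpace β]
    [IsUltrametricDist α] [IsUltrametricDist β] : IsUltrametricDist (α × β) where
  dist_triangle_max x y z := by
    simp only [Prod.dist_eq]
    exact max_le
      ((dist_triangle_max _ y.1 _).trans (max_le_max (le_max_left _ _) (le_max_left _ _)))
      ((dist_triangle_max _ y.2 _).trans (max_le_max (le_max_right _ _) (le_max_right _ _)))

theorem IsCompact.finite_setOf_inter_nonempty {α ι : Type*} [TopologicalSpace α] {K : Set α}
    (hK : IsCompact K) {W : ι → Set α} (hW : ∀ i, IsOpen (W i)) (hKW : K ⊆ ⋃ i, W i)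
    (hd : Pairwise (Disjoint on W)) : {i | (W i ∩ K).Nonempty}.Finite := by
  obtain ⟨t, ht⟩ := hK.elim_finite_subcover W hW hKW
  refine t.finite_toSet.subset fun i ⟨x, hxi, hxK⟩ => ?_
  obtain ⟨i', hi', hxi'⟩ := mem_iUnion₂.mp (ht hxK)
  by_contra hi
  exact disjoint_left.mp (hd (ne_of_mem_of_not_mem hi' hi).symm) hxi hxi'

section ClopenContent

variable {Y B : Type*} [TopologicalSpace Y] [AddCommGroup B]

theorem isSetRing_isClopen : IsSetRing {U : Set Y | IsClopen U} where
  empty_mem := isClopen_empty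
  union_mem _ _ hs ht := hs.union ht
  sdiff_mem _ _ hs ht := hs.diff ht

theorem LocallyConstant.charFn_union {U V : Set Y} (hU : IsClopen U) (hV : IsClopen V)
    (hUV : Disjoint U V) :
    charFn ℤ (hU.union hV) = charFn ℤ hU + charFn ℤ hV := by
  ext y
  simp [coe_charFn, indicator_union_of_disjoint hUV]

variable [CompactSpace Y] (m : AddContent B {U : Set Y | IsClopen U})

noncomputable def lcIntegral (f : LocallyConstant Y ℤ) : B :=
  ∑ n ∈ f.range_finite.toFinset, n • m (f ⁻¹' {n})

theorem lcIntegral_eq_sum_of_range_subset {f : LocallyConstant Y ℤ} {s : Finset ℤ}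
    (hs : range f ⊆ s) : lcIntegral m f = ∑ n ∈ s, n • m (f ⁻¹' {n}) := by
  refine Finset.sum_subset (fun n hn => hs (f.range_finite.mem_toFinset.mp hn)) fun n _ hn => ?_
  rw [preimage_singleton_eq_empty.mpr (by simpa using hn), addContent_empty, smul_zero]

theorem lcIntegral_map {γ : Type*} (q : LocallyConstant Y γ) (k : γ → ℤ) :
    lcIntegral m (q.map k) = ∑ c ∈ q.range_finite.toFinset, k c • m (q ⁻¹' {c}) := by
  classical
  rw [lcIntegral_eq_sum_of_range_subset m (s := q.range_finite.toFinset.image k) ?_]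
  · refine Finset.sum_image' _ fun c _ => ?_
    have hfiber : q.map k ⁻¹' {k c} =
        ⋃ c' ∈ q.range_finite.toFinset.filter (k · = k c), q ⁻¹' {c'} := by
      ext y
      simp [LocallyConstant.map_apply]
    rw [hfiber, addContent_biUnion_eq isSetRing_isClopen (s := fun c' => q ⁻¹' {c'})
      (fun c' _ => (q.isLocallyConstant.isClopen_fiber c' : IsClopen (q ⁻¹' {c'})))
      (fun _ _ _ _ hij => (disjoint_singleton.mpr hij).preimage q), Finset.smul_sum]
    exact Finset.sum_congr rfl fun c' hc' => by rw [(Finset.mem_filter.mp hc').2]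
  · rintro _ ⟨y, rfl⟩
    simp [LocallyConstant.map_apply]

theorem lcIntegral_add (f g : LocallyConstant Y ℤ) :
    lcIntegral m (f + g) = lcIntegral m f + lcIntegral m g := by
  let q : LocallyConstant Y (ℤ × ℤ) := ⟨fun y => (f y, g y), f.2.prodMk g.2⟩
  have hf : f = q.map Prod.fst := rfl
  have hg : g = q.map Prod.snd := rfl
  have hfg : f + g = q.map (fun c => c.1 + c.2) := rfl
  rw [hfg, hf, hg, lcIntegral_map, lcIntegral_map, lcIntegral_map, ← Finset.sum_add_distrib]
  simp only [add_smul]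

theorem lcIntegral_charFn {U : Set Y} (hU : IsClopen U) :
    lcIntegral m (LocallyConstant.charFn ℤ hU) = m U := by
  have hrange : range (LocallyConstant.charFn ℤ hU) ⊆ ({0, 1} : Finset ℤ) := by
    rintro _ ⟨y, rfl⟩
    by_cases hy : y ∈ U <;> simp [LocallyConstant.coe_charFn, hy]
  rw [lcIntegral_eq_sum_of_range_subset m hrange, Finset.sum_pair zero_ne_one, zero_smul,
    zero_add, one_smul]
  congr
  ext y
  exact LocallyConstant.charFn_eq_one ℤ y hU

noncomputable def lcIntegralHom : LocallyConstant Y ℤ →+ B :=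
  AddMonoidHom.mk' (lcIntegral m) (lcIntegral_add m)

theorem MeasureTheory.AddContent.exists_lift_isClopen [T2Space Y] [TotallyDisconnectedSpace Y]
    {A : Type*} [AddCommGroup A] (φ : A →+ B) (hφ : Function.Surjective φ) :
    ∃ m' : AddContent A {U : Set Y | IsClopen U}, ∀ U, IsClopen U → φ (m' U) = m U := by
  classical
  have : Module.Free ℤ (LocallyConstant Y ℤ) := LocallyConstant.freeOfProfinite (Profinite.of Y)
  obtain ⟨ψ, hψ⟩ := Module.projective_lifting_property φ.toIntLinearMap
    (lcIntegralHom m).toIntLinearMap hφ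
  let m' : Set Y → A := fun U => if hU : IsClopen U then ψ (LocallyConstant.charFn ℤ hU) else 0
  refine ⟨isSetRing_isClopen.addContent_of_union m' ?_ ?_, fun U hU => ?_⟩
  · have h0 : LocallyConstant.charFn ℤ isClopen_empty = (0 : LocallyConstant Y ℤ) := by
      ext y; simp [LocallyConstant.coe_charFn]
    simp [m', isClopen_empty, h0]
  · intro U V (hU : IsClopen U) (hV : IsClopen V) hUV
    simp only [m', dif_pos (hU.union hV), dif_pos hU, dif_pos hV]
    rw [LocallyConstant.charFn_union hU hV hUV, map_add]
  · change φ (m' U) = m U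
    simpa [m', hU, lcIntegralHom, lcIntegral_charFn] using
      LinearMap.congr_fun hψ (LocallyConstant.charFn ℤ hU)

end ClopenContent

section Padic

variable {p : ℕ} [Fact p.Prime]

theorem pScale_eq_smul (j : ℤ) (U : Set (ℚ_[p] × ℚ_[p])) :
    pScale p j U = ((p : ℚ_[p]) ^ j) • U := rfl

theorem zpow_p_ne_zero (j : ℤ) : (p : ℚ_[p]) ^ j ≠ 0 :=
  zpow_ne_zero j (NeZero.ne _)

theorem pScale_eq_preimage (j : ℤ) (U : Set (ℚ_[p] × ℚ_[p])) :
    pScale p j U = ((p : ℚ_[p]) ^ (-j) • ·) ⁻¹' U := by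
  rw [preimage_smul₀ (zpow_p_ne_zero _), zpow_neg, inv_inv, pScale_eq_smul]

theorem pScale_pScale (i j : ℤ) (U : Set (ℚ_[p] × ℚ_[p])) :
    pScale p i (pScale p j U) = pScale p (i + j) U := by
  rw [pScale_eq_smul, pScale_eq_smul, pScale_eq_smul, smul_smul, ← zpow_add₀ (NeZero.ne _)]

theorem pScale_zero (U : Set (ℚ_[p] × ℚ_[p])) : pScale p 0 U = U := by
  rw [pScale_eq_smul, zpow_zero, one_smul]

theorem X0_eq_sphere : X0 p = Metric.sphere 0 1 := by
  ext v
  rw [mem_sphere_zero_iff_norm, Prod.norm_def, max_eq_iff]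
  simp only [X0, mem_ofPred_eq]
  constructor
  · rintro ⟨h1, h2, h | h⟩
    · exact Or.inl ⟨h, h ▸ h2⟩
    · exact Or.inr ⟨h, h ▸ h1⟩
  · rintro (⟨h, h'⟩ | ⟨h, h'⟩)
    · exact ⟨h.le, h'.trans h.le, Or.inl h⟩
    · exact ⟨h'.trans h.le, h.le, Or.inr h⟩

theorem isCompactOpen_X0 : IsCompactOpen p (X0 p) := by
  rw [X0_eq_sphere]
  exact ⟨isCompact_sphere 0 1, IsUltrametricDist.isOpen_sphere 0 one_ne_zero,
    fun v hv => ne_zero_of_mem_unit_sphere ⟨v, hv⟩⟩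

theorem IsCompactOpen.pScale {U : Set (ℚ_[p] × ℚ_[p])} (hU : IsCompactOpen p U) (j : ℤ) :
    IsCompactOpen p (pScale p j U) := by
  refine ⟨?_, ?_, ?_⟩
  · exact hU.1.smul ((p : ℚ_[p]) ^ j)
  · exact hU.2.1.smul₀ (zpow_p_ne_zero (p := p) j)
  · rw [pScale_eq_preimage]
    exact fun v hv hv0 => hU.2.2 hv (by simp [hv0] : _ = (0 : ℚ_[p] × ℚ_[p]))

theorem exists_zpow_smul_mem_X0 {v : ℚ_[p] × ℚ_[p]} (hv : v ≠ 0) :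
    ∃ j : ℤ, (p : ℚ_[p]) ^ j • v ∈ X0 p := by
  obtain ⟨x, hvx⟩ : ∃ x : ℚ_[p], ‖v‖ = ‖x‖ :=
    (max_choice ‖v.1‖ ‖v.2‖).elim (fun h => ⟨v.1, h⟩) (fun h => ⟨v.2, h⟩)
  have hx : x ≠ 0 := norm_ne_zero_iff.mp (hvx ▸ norm_ne_zero_iff.mpr hv)
  refine ⟨-x.valuation, ?_⟩
  rw [X0_eq_sphere, mem_sphere_zero_iff_norm, norm_smul, hvx, Padic.norm_p_zpow,
    Padic.norm_eq_zpow_neg_valuation hx, neg_neg,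
    ← zpow_add₀ (NeZero.ne _), add_neg_cancel, zpow_zero]

theorem eq_of_zpow_smul_mem_X0 {v : ℚ_[p] × ℚ_[p]} {i j : ℤ}
    (hi : (p : ℚ_[p]) ^ i • v ∈ X0 p) (hj : (p : ℚ_[p]) ^ j • v ∈ X0 p) : i = j := by
  rw [X0_eq_sphere, mem_sphere_zero_iff_norm, norm_smul, norm_zpow] at hi hj
  have hv : ‖v‖ ≠ 0 := right_ne_zero_of_mul_eq_one hi
  exact zpow_right_injective₀ (norm_pos_iff.mpr (NeZero.ne _)) Padic.norm_p_lt_one.ne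
    (mul_right_cancel₀ hv (hi.trans hj.symm))

theorem mem_pScale_X0 {j : ℤ} {v : ℚ_[p] × ℚ_[p]} :
    v ∈ pScale p j (X0 p) ↔ (p : ℚ_[p]) ^ (-j) • v ∈ X0 p := by
  rw [pScale_eq_preimage]; rfl

theorem iUnion_pScale_X0 : ⋃ j : ℤ, pScale p j (X0 p) = X p := by
  ext v
  simp only [mem_iUnion, mem_pScale_X0]
  constructor
  · rintro ⟨j, hj⟩ rfl
    rw [smul_zero] at hj
    exact isCompactOpen_X0.2.2 hj rfl
  · intro hv
    obtain ⟨j, hj⟩ := exists_zpow_smul_mem_X0 hv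
    exact ⟨-j, by rwa [neg_neg]⟩

theorem pairwise_disjoint_pScale_X0 :
    Pairwise (Disjoint on fun j : ℤ => pScale p j (X0 p)) := fun _ _ hij =>
  disjoint_left.mpr fun _ hi hj =>
    hij (neg_inj.mp (eq_of_zpow_smul_mem_X0 (mem_pScale_X0.mp hi) (mem_pScale_X0.mp hj)))

theorem finite_setOf_pScale_X0_inter_nonempty {U : Set (ℚ_[p] × ℚ_[p])}
    (hU : IsCompactOpen p U) : {j : ℤ | (pScale p j (X0 p) ∩ U).Nonempty}.Finite :=
  hU.1.finite_setOf_inter_nonempty (fun j => (isCompactOpen_X0.pScale j).2.1)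
    (iUnion_pScale_X0 (p := p) ▸ hU.2.2) pairwise_disjoint_pScale_X0

theorem isSetRing_isCompactOpen : IsSetRing {U | IsCompactOpen p U} where
  empty_mem := ⟨isCompact_empty, isOpen_empty, empty_subset _⟩
  union_mem _ _ hU hV := ⟨hU.1.union hV.1, hU.2.1.union hV.2.1, union_subset hU.2.2 hV.2.2⟩
  sdiff_mem _ _ hU hV := ⟨hU.1.diff hV.2.1, hU.2.1.sdiff hV.1.isClosed, sdiff_subset.trans hU.2.2⟩

instance : CompactSpace (X0 p) := isCompact_iff_compactSpace.mp isCompactOpen_X0.1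

theorem IsCompactOpen.isClopen_preimage_val {U : Set (ℚ_[p] × ℚ_[p])} (hU : IsCompactOpen p U) :
    IsClopen (((↑) : X0 p → ℚ_[p] × ℚ_[p]) ⁻¹' U) :=
  ⟨hU.1.isClosed.preimage continuous_subtype_val, hU.2.1.preimage continuous_subtype_val⟩

theorem IsClopen.isCompactOpen_image_val {S : Set (X0 p)} (hS : IsClopen S) :
    IsCompactOpen p (((↑) : X0 p → ℚ_[p] × ℚ_[p]) '' S) :=
  ⟨hS.1.isCompact.image continuous_subtype_val,
    isCompactOpen_X0.2.1.isOpenMap_subtype_val _ hS.2,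
    (image_subset_range _ _).trans (Subtype.range_coe ▸ isCompactOpen_X0.2.2)⟩

theorem IsPInvariant.map_pScale {B : Type*} [AddCommGroup B] {μ : Set (ℚ_[p] × ℚ_[p]) → B}
    (hinv : IsPInvariant p μ) (j : ℤ) {U : Set (ℚ_[p] × ℚ_[p])}
    (hU : IsCompactOpen p U) : μ (pScale p j U) = μ U := by
  induction j using Int.induction_on with
  | zero => rw [pScale_zero]
  | succ k ih => rw [add_comm, ← pScale_pScale, hinv _ (hU.pScale k), ih]
  | pred k ih =>
    rw [← ih, ← hinv _ (hU.pScale _), pScale_pScale]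
    ring_nf

namespace IsDistribution

variable {B : Type*} [AddCommGroup B] {μ : Set (ℚ_[p] × ℚ_[p]) → B} (hμ : IsDistribution p μ)
include hμ

theorem map_empty : μ ∅ = 0 := by
  simpa using hμ ∅ ∅ isSetRing_isCompactOpen.empty_mem isSetRing_isCompactOpen.empty_mem
    (disjoint_empty _)

noncomputable def toAddContent : AddContent B {U | IsCompactOpen p U} :=
  isSetRing_isCompactOpen.addContent_of_union μ hμ.map_empty fun hU hV => hμ _ _ hU hV

theorem eq_finsum_pScale_X0_inter {U : Set (ℚ_[p] × ℚ_[p])} (hU : IsCompactOpen p U) :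
    μ U = ∑ᶠ j : ℤ, μ (pScale p j (X0 p) ∩ U) := by
  let s := (finite_setOf_pScale_X0_inter_nonempty hU).toFinset
  have hcover : ⋃ j ∈ s, pScale p j (X0 p) ∩ U = U := by
    refine subset_antisymm (iUnion₂_subset fun _ _ => inter_subset_right) fun v hv => ?_
    obtain ⟨j, hj⟩ := mem_iUnion.mp ((iUnion_pScale_X0 (p := p)).symm ▸ hU.2.2 hv)
    exact mem_biUnion (by simpa [s] using ⟨v, hj, hv⟩) ⟨hj, hv⟩
  rw [finsum_eq_sum_of_support_subset _ (s := s) fun j hj => ?_]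
  · conv_lhs => rw [← hcover]
    exact addContent_biUnion_eq (m := hμ.toAddContent) isSetRing_isCompactOpen
      (fun j _ => isSetRing_isCompactOpen.inter_mem (isCompactOpen_X0.pScale j) hU)
      ((pairwise_disjoint_pScale_X0.mono fun _ _ h =>
        h.mono inter_subset_left inter_subset_left).set_pairwise _)
  · by_contra hjs
    have hempty : pScale p j (X0 p) ∩ U = ∅ :=
      not_nonempty_iff_eq_empty.mp (by simpa [s] using hjs)
    exact hj (by simp only [hempty, hμ.map_empty])

noncomputable def restrictX0 : AddContent B {S : Set (X0 p) | IsClopen S} :=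
  isSetRing_isClopen.addContent_of_union (fun S => μ (((↑) : X0 p → ℚ_[p] × ℚ_[p]) '' S))
    (by rw [image_empty, hμ.map_empty])
    fun hS hT hST => by
      rw [image_union]
      exact hμ _ _ hS.isCompactOpen_image_val hT.isCompactOpen_image_val
        (disjoint_image_of_injective Subtype.val_injective hST)

end IsDistribution

section ExtendByScaling

variable {A : Type*} [AddCommGroup A]

noncomputable def extendByScaling (ν : Set (X0 p) → A) (U : Set (ℚ_[p] × ℚ_[p])) : A :=
  ∑ᶠ j : ℤ, ν (((↑) : X0 p → ℚ_[p] × ℚ_[p]) ⁻¹' pScale p (-j) U)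

theorem hasFiniteSupport_preimage_pScale {ν : Set (X0 p) → A} (hν : ν ∅ = 0)
    {U : Set (ℚ_[p] × ℚ_[p])} (hU : IsCompactOpen p U) :
    HasFiniteSupport fun j : ℤ => ν (((↑) : X0 p → ℚ_[p] × ℚ_[p]) ⁻¹' pScale p (-j) U) := by
  refine (finite_setOf_pScale_X0_inter_nonempty hU).subset fun j hj => ?_
  by_contra hempty
  refine hj (Eq.trans (congrArg ν (eq_empty_of_forall_notMem fun x hx => hempty ?_)) hν)
  rw [mem_preimage, pScale_eq_preimage, neg_neg] at hx
  exact ⟨_, smul_mem_smul_set (a := (p : ℚ_[p]) ^ j) x.2, hx⟩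

theorem isPInvariant_extendByScaling (ν : Set (X0 p) → A) :
    IsPInvariant p (extendByScaling ν) := by
  intro U _
  rw [extendByScaling, extendByScaling, ← finsum_comp_equiv (Equiv.addRight 1)]
  refine finsum_congr fun j => ?_
  rw [pScale_pScale, Equiv.coe_addRight]
  ring_nf

variable (ν : AddContent A {S : Set (X0 p) | IsClopen S})

theorem isDistribution_extendByScaling : IsDistribution p (extendByScaling ν) := by
  intro U V hU hV hUV
  rw [extendByScaling, extendByScaling, extendByScaling,
    ← finsum_add_distrib (hasFiniteSupport_preimage_pScale addContent_empty hU)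
      (hasFiniteSupport_preimage_pScale addContent_empty hV)]
  refine finsum_congr fun j => ?_
  have hunion : pScale p (-j) (U ∪ V) = pScale p (-j) U ∪ pScale p (-j) V :=
    smul_set_union (a := (p : ℚ_[p]) ^ (-j))
  have hdisj : Disjoint (pScale p (-j) U) (pScale p (-j) V) := by
    rw [pScale_eq_preimage, pScale_eq_preimage]
    exact hUV.preimage _
  rw [hunion, preimage_union]
  exact addContent_union isSetRing_isClopen (hU.pScale _).isClopen_preimage_val
    (hV.pScale _).isClopen_preimage_val (hdisj.preimage _)

end ExtendByScaling

theorem extendByScaling_restrictX0 {B : Type*} [AddCommGroup B] {μ : Set (ℚ_[p] × ℚ_[p]) → B}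
    (hμ : IsDistribution p μ) (hinv : IsPInvariant p μ) {U : Set (ℚ_[p] × ℚ_[p])}
    (hU : IsCompactOpen p U) : extendByScaling hμ.restrictX0 U = μ U := by
  rw [hμ.eq_finsum_pScale_X0_inter hU, extendByScaling]
  refine finsum_congr fun j => ?_
  change μ (_ '' (_ ⁻¹' _)) = _
  have hrescale : pScale p (-j) (pScale p j (X0 p) ∩ U) = X0 p ∩ pScale p (-j) U := by
    rw [pScale_eq_smul, smul_set_inter₀ (zpow_p_ne_zero _), ← pScale_eq_smul, ← pScale_eq_smul,
      pScale_pScale, neg_add_cancel, pScale_zero]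
  rw [Subtype.image_preimage_coe, ← hrescale,
    hinv.map_pScale _ (isSetRing_isCompactOpen.inter_mem (isCompactOpen_X0.pScale j) hU)]

end Padic

/-- Lifting of `p`-invariant distributions along a surjective homomorphism of abelian
groups: if `φ : A → B` is surjective and `μ` is a `p`-invariant `B`-valued distribution
on `X`, there is a `p`-invariant `A`-valued distribution `μ̃` with `φ ∘ μ̃ = μ` on
compact open subsets of `X`. -/
theorem stmt4 (p : ℕ) [Fact p.Prime] {A B : Type*} [AddCommGroup A] [AddCommGroup B]
    (φ : A →+ B) (hφ : Function.Surjective φ)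
    (μ : Set (ℚ_[p] × ℚ_[p]) → B) (hμ : IsDistribution p μ) (hinv : IsPInvariant p μ) :
    ∃ μt : Set (ℚ_[p] × ℚ_[p]) → A, IsDistribution p μt ∧ IsPInvariant p μt ∧
      ∀ U, IsCompactOpen p U → φ (μt U) = μ U := by
  obtain ⟨ν, hν⟩ := hμ.restrictX0.exists_lift_isClopen φ hφ
  refine ⟨extendByScaling ν, isDistribution_extendByScaling ν, isPInvariant_extendByScaling ν,
    fun U hU => ?_⟩
  rw [extendByScaling, φ.map_finsum (hasFiniteSupport_preimage_pScale addContent_empty hU),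
    ← extendByScaling_restrictX0 hμ hinv hU]
  exact finsum_congr fun j => hν _ (hU.pScale (-j)).isClopen_preimage_val
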